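/- arXiv:2206.01721 — 11 statements merged into one kernel-verified Lean document; each statement's English description precedes it below -/
import Mathlib

section
/- If three compact convex sets A, B, C in the plane are pairwise intersecting but have no common point, then for any points x ∈ B ∩ C, y ∈ A ∩ C, z ∈ A ∩ B, the points x, y, z are not collinear (the triangle xyz is nondegenerate). -/
noncomputable def det2 (p q r : ℝ × ℝ) : ℝ :=
  (q.1 - p.1) * (r.2 - p.2) - (q.2 - p.2) * (r.1 - p.1)

noncomputable def ptOrient (p q r : ℝ × ℝ) : ℝ := Real.sign (det2 p q r)

theorem stmt_0 (A B C : Set (ℝ × ℝ))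
    (hAc : IsCompact A) (hBc : IsCompact B) (hCc : IsCompact C)
    (hA : Convex ℝ A) (hB : Convex ℝ B) (hC : Convex ℝ C)
    (hAB : (A ∩ B).Nonempty) (hBC : (B ∩ C).Nonempty) (hAC : (A ∩ C).Nonempty)
    (hABC : A ∩ B ∩ C = ∅)
    (x y z : ℝ × ℝ) (hx : x ∈ B ∩ C) (hy : y ∈ A ∩ C) (hz : z ∈ A ∩ B) :
    ¬ Collinear ℝ ({x, y, z} : Set (ℝ × ℝ)) := by
  intro hcol
  obtain ⟨hxB, hxC⟩ := hx
  obtain ⟨hyA, hyC⟩ := hy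
  obtain ⟨hzA, hzB⟩ := hz
  have hne : (A ∩ B ∩ C).Nonempty := by
    rcases hcol.wbtw_or_wbtw_or_wbtw with h | h | h
    · -- y between x and z : y ∈ segment x z ⊆ B
      have hyB : y ∈ B := hB.segment_subset hxB hzB (mem_segment_iff_wbtw.mpr h)
      exact ⟨y, ⟨hyA, hyB⟩, hyC⟩
    · -- z between y and x : z ∈ segment y x ⊆ C
      have hzC : z ∈ C := hC.segment_subset hyC hxC (mem_segment_iff_wbtw.mpr h)
      exact ⟨z, ⟨hzA, hzB⟩, hzC⟩
    · -- x between z and y : x ∈ segment z y ⊆ A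
      have hxA : x ∈ A := hA.segment_subset hzA hyA (mem_segment_iff_wbtw.mpr h)
      exact ⟨x, ⟨hxA, hxB⟩, hxC⟩
  rw [hABC] at hne
  exact Set.not_nonempty_empty hne
end

section
/- Let A, B, C be compact convex sets in the plane that pairwise intersect but have empty common intersection. Then for any choices of points x, x' ∈ B ∩ C, y, y' ∈ A ∩ C, z, z' ∈ A ∩ B, the orientation (sign of the 2×2 determinant of y−x and z−x) of the triple (x, y, z) equals the orientation of (x', y', z'). -/
lemma det2_ne_zero (A B C : Set (ℝ × ℝ))
    (hA : Convex ℝ A) (hB : Convex ℝ B) (hC : Convex ℝ C)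
    (hABC : A ∩ B ∩ C = ∅)
    {x y z : ℝ × ℝ} (hx : x ∈ B ∩ C) (hy : y ∈ A ∩ C) (hz : z ∈ A ∩ B) :
    det2 x y z ≠ 0 := by
  intro h
  unfold det2 at h
  have hempty : ∀ p : ℝ × ℝ, p ∈ A → p ∈ B → p ∈ C → False := by
    intro p hpA hpB hpC
    have : p ∈ A ∩ B ∩ C := ⟨⟨hpA, hpB⟩, hpC⟩
    rw [hABC] at this
    exact this
  obtain ⟨t, ht1, ht2⟩ : ∃ t : ℝ, z.1 = (1-t) * x.1 + t * y.1 ∧ z.2 = (1-t) * x.2 + t * y.2 := by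
    by_cases h1 : y.1 - x.1 ≠ 0
    · refine ⟨(z.1 - x.1) / (y.1 - x.1), ?_, ?_⟩
      · field_simp; ring
      · have key : z.2 - x.2 = (z.1 - x.1) / (y.1 - x.1) * (y.2 - x.2) := by
          rw [div_mul_eq_mul_div, eq_div_iff h1]
          linear_combination h
        linear_combination key
    · push_neg at h1
      by_cases h2 : y.2 - x.2 ≠ 0
      · refine ⟨(z.2 - x.2) / (y.2 - x.2), ?_, ?_⟩
        · have hz1 : z.1 = x.1 := by
            have h0 : (y.2 - x.2) * (z.1 - x.1) = 0 := by
              linear_combination -h + (z.2 - x.2) * h1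
            rcases mul_eq_zero.mp h0 with h' | h'
            · exact absurd h' h2
            · linarith
          have hy1 : y.1 = x.1 := by linarith
          rw [hy1, hz1]; ring
        · field_simp; ring
      · push_neg at h2
        have hxy : y = x := by apply Prod.ext <;> linarith
        exact absurd (hempty y hy.1 (hxy ▸ hx.1) hy.2) (by simp)
  rcases le_or_gt t 0 with htle | htpos
  · -- x ∈ [z, y] ⊆ A
    have hden : (0:ℝ) < 1 - t := by linarith
    have hxmem : (1/(1-t)) • z + (-t/(1-t)) • y = x := by
      apply Prod.ext
      · simp only [Prod.fst_add, Prod.smul_fst, smul_eq_mul]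
        field_simp
        linear_combination ht1
      · simp only [Prod.snd_add, Prod.smul_snd, smul_eq_mul]
        field_simp
        linear_combination ht2
    have := hA hz.1 hy.1 (a := 1/(1-t)) (b := -t/(1-t))
      (le_of_lt (div_pos one_pos hden)) (div_nonneg (by linarith) (le_of_lt hden))
      (by field_simp; ring)
    rw [hxmem] at this
    exact hempty x this hx.1 hx.2
  · rcases le_or_gt t 1 with htle1 | htgt
    · -- z ∈ [x, y] ⊆ C
      have hzmem : (1-t) • x + t • y = z := by
        apply Prod.ext
        · simp only [Prod.fst_add, Prod.smul_fst, smul_eq_mul]; linarith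
        · simp only [Prod.snd_add, Prod.smul_snd, smul_eq_mul]; linarith
      have := hC hx.2 hy.2 (a := 1-t) (b := t) (by linarith) (le_of_lt htpos) (by ring)
      rw [hzmem] at this
      exact hempty z hz.1 hz.2 this
    · -- y ∈ [x, z] ⊆ B
      have htne : t ≠ 0 := by linarith
      have hymem : (1 - 1/t) • x + (1/t) • z = y := by
        apply Prod.ext
        · simp only [Prod.fst_add, Prod.smul_fst, smul_eq_mul]
          field_simp
          linear_combination ht1
        · simp only [Prod.snd_add, Prod.smul_snd, smul_eq_mul]
          field_simp
          linear_combination ht2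
      have h1t : (0:ℝ) ≤ 1 - 1/t := by
        have : 1/t ≤ 1 := by rw [div_le_one (by linarith)]; linarith
        linarith
      have := hB hx.1 hz.2 (a := 1 - 1/t) (b := 1/t) h1t
        (div_nonneg zero_le_one (by linarith)) (by ring)
      rw [hymem] at this
      exact hempty y hy.1 this hy.2

theorem stmt_1 (A B C : Set (ℝ × ℝ))
    (hAc : IsCompact A) (hBc : IsCompact B) (hCc : IsCompact C)
    (hA : Convex ℝ A) (hB : Convex ℝ B) (hC : Convex ℝ C)
    (hAB : (A ∩ B).Nonempty) (hBC : (B ∩ C).Nonempty) (hAC : (A ∩ C).Nonempty)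
    (hABC : A ∩ B ∩ C = ∅)
    (x x' y y' z z' : ℝ × ℝ)
    (hx : x ∈ B ∩ C) (hx' : x' ∈ B ∩ C)
    (hy : y ∈ A ∩ C) (hy' : y' ∈ A ∩ C)
    (hz : z ∈ A ∩ B) (hz' : z' ∈ A ∩ B) :
    ptOrient x y z = ptOrient x' y' z' := by
  set S : Set ((ℝ × ℝ) × (ℝ × ℝ) × (ℝ × ℝ)) := (B ∩ C) ×ˢ ((A ∩ C) ×ˢ (A ∩ B)) with hS
  have hconv : Convex ℝ S := ((hB.inter hC).prod ((hA.inter hC).prod (hA.inter hB)))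
  have hconn : IsPreconnected S := hconv.isPreconnected
  set f : ((ℝ × ℝ) × (ℝ × ℝ) × (ℝ × ℝ)) → ℝ := fun p => det2 p.1 p.2.1 p.2.2 with hf
  have hcont : ContinuousOn f S := by
    apply Continuous.continuousOn
    unfold f det2
    fun_prop
  have hne : ∀ p ∈ S, f p ≠ 0 := by
    rintro ⟨a, b, c⟩ ⟨ha, hb, hc⟩
    exact det2_ne_zero A B C hA hB hC hABC ha hb hc
  have hP : (x, y, z) ∈ S := ⟨hx, hy, hz⟩
  have hQ : (x', y', z') ∈ S := ⟨hx', hy', hz'⟩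
  have key : ∀ p ∈ S, ∀ q ∈ S, f p ≤ f q → Real.sign (f p) = Real.sign (f q) := by
    intro p hp q hq hle
    have hsub := hconn.intermediate_value hp hq hcont
    rcases lt_or_gt_of_ne (hne p hp) with hneg | hpos
    · rcases lt_or_gt_of_ne (hne q hq) with hq' | hq'
      · rw [Real.sign_of_neg hneg, Real.sign_of_neg hq']
      · exfalso
        obtain ⟨c, hc, hc0⟩ := hsub ⟨le_of_lt hneg, le_of_lt hq'⟩
        exact hne c hc hc0
    · have hq' : 0 < f q := lt_of_lt_of_le hpos hle
      rw [Real.sign_of_pos hpos, Real.sign_of_pos hq']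
  rcases le_total (f (x, y, z)) (f (x', y', z')) with hle | hle
  · exact key _ hP _ hQ hle
  · exact (key _ hQ _ hP hle).symm
end

section
/- Let A, B, C be compact convex planar sets with pairwise nonempty intersections and empty triple intersection, and let A' ⊆ A, B' ⊆ B, C' ⊆ C be convex sets that are pairwise intersecting. Then the orientation of (A', B', C') equals the orientation of (A, B, C), where the orientation of such a triple is defined as the orientation of any points x ∈ B∩C, y ∈ A∩C, z ∈ A∩B (respectively x' ∈ B'∩C', etc.). -/
/-!
Every triple of points `x ∈ B ∩ C`, `y ∈ A ∩ C`, `z ∈ A ∩ B` is non-degenerate: if the three points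
were collinear, one of them would lie between the other two, and by convexity it would then lie
in `A ∩ B ∩ C`. So `det2` does not vanish on the convex, hence connected, set
`(B ∩ C) × (A ∩ C) × (A ∩ B)`, and its sign is constant there. The points chosen for `A', B', C'`
lie in this set as well.
-/

lemma Prod.exists_eq_smul_of_mul_sub_mul_eq_zero {u w : ℝ × ℝ} (hu : u ≠ 0)
    (h : u.1 * w.2 - u.2 * w.1 = 0) : ∃ r : ℝ, w = r • u := by
  by_cases hu₁ : u.1 = 0
  · have hu₂ : u.2 ≠ 0 := fun hu₂ => hu (Prod.ext hu₁ hu₂)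
    refine ⟨w.2 / u.2, Prod.ext ?_ ?_⟩
    · have hw₁ : w.1 = 0 := by simpa [hu₁, hu₂] using h
      simp [hu₁, hw₁]
    · simp [hu₂]
  · refine ⟨w.1 / u.1, Prod.ext ?_ ?_⟩
    · simp [hu₁]
    · simp only [Prod.smul_snd, smul_eq_mul]
      field_simp
      linarith

lemma collinear_of_det2_eq_zero {x y z : ℝ × ℝ} (h : det2 x y z = 0) :
    Collinear ℝ ({x, y, z} : Set (ℝ × ℝ)) := by
  by_cases hyx : y = x
  · subst hyx
    simpa using collinear_pair ℝ y z
  obtain ⟨r, hr⟩ := Prod.exists_eq_smul_of_mul_sub_mul_eq_zero (w := z - x) (sub_ne_zero.2 hyx) h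
  rw [collinear_iff_of_mem (Set.mem_insert x _)]
  refine ⟨y - x, ?_⟩
  rintro p (rfl | rfl | rfl)
  · exact ⟨0, by simp⟩
  · exact ⟨1, by simp⟩
  · exact ⟨r, by rw [← hr, vadd_eq_add, sub_add_cancel]⟩

lemma det2_ne_zero_of_inter_eq_empty {A B C : Set (ℝ × ℝ)}
    (hA : Convex ℝ A) (hB : Convex ℝ B) (hC : Convex ℝ C) (hABC : A ∩ B ∩ C = ∅)
    {x y z : ℝ × ℝ} (hx : x ∈ B ∩ C) (hy : y ∈ A ∩ C) (hz : z ∈ A ∩ B) :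
    det2 x y z ≠ 0 := by
  intro h
  rw [← Set.not_nonempty_iff_eq_empty] at hABC
  rcases (collinear_of_det2_eq_zero h).wbtw_or_wbtw_or_wbtw with hw | hw | hw
  · exact hABC ⟨y, ⟨hy.1, hB.segment_subset hx.1 hz.2 hw.mem_segment⟩, hy.2⟩
  · exact hABC ⟨z, hz, hC.segment_subset hy.2 hx.2 hw.mem_segment⟩
  · exact hABC ⟨x, ⟨hA.segment_subset hz.1 hy.1 hw.mem_segment, hx.1⟩, hx.2⟩

lemma IsPreconnected.sign_eq {α : Type*} [TopologicalSpace α] {s : Set α}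
    (hs : IsPreconnected s) {f : α → ℝ} (hf : ContinuousOn f s) (hf₀ : ∀ p ∈ s, f p ≠ 0)
    {a b : α} (ha : a ∈ s) (hb : b ∈ s) : Real.sign (f a) = Real.sign (f b) := by
  rcases (hf₀ a ha).lt_or_gt with ha₀ | ha₀ <;> rcases (hf₀ b hb).lt_or_gt with hb₀ | hb₀
  · rw [Real.sign_of_neg ha₀, Real.sign_of_neg hb₀]
  · obtain ⟨p, hp, hp₀⟩ := hs.intermediate_value ha hb hf ⟨ha₀.le, hb₀.le⟩
    exact absurd hp₀ (hf₀ p hp)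
  · obtain ⟨p, hp, hp₀⟩ := hs.intermediate_value hb ha hf ⟨hb₀.le, ha₀.le⟩
    exact absurd hp₀ (hf₀ p hp)
  · rw [Real.sign_of_pos ha₀, Real.sign_of_pos hb₀]

lemma continuous_det2 :
    Continuous fun p : (ℝ × ℝ) × (ℝ × ℝ) × (ℝ × ℝ) => det2 p.1 p.2.1 p.2.2 := by
  unfold det2
  fun_prop

lemma ptOrient_eq_of_inter_eq_empty {A B C : Set (ℝ × ℝ)}
    (hA : Convex ℝ A) (hB : Convex ℝ B) (hC : Convex ℝ C) (hABC : A ∩ B ∩ C = ∅)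
    {x y z x' y' z' : ℝ × ℝ} (hx : x ∈ B ∩ C) (hy : y ∈ A ∩ C) (hz : z ∈ A ∩ B)
    (hx' : x' ∈ B ∩ C) (hy' : y' ∈ A ∩ C) (hz' : z' ∈ A ∩ B) :
    ptOrient x' y' z' = ptOrient x y z := by
  have hS : IsPreconnected ((B ∩ C) ×ˢ (A ∩ C) ×ˢ (A ∩ B)) :=
    ((hB.inter hC).prod ((hA.inter hC).prod (hA.inter hB))).isPreconnected
  refine hS.sign_eq (a := (x', y', z')) (b := (x, y, z)) continuous_det2.continuousOn ?_
    ⟨hx', hy', hz'⟩ ⟨hx, hy, hz⟩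
  rintro ⟨p, q, r⟩ ⟨hp, hq, hr⟩
  exact det2_ne_zero_of_inter_eq_empty hA hB hC hABC hp hq hr

theorem stmt_2_general (A B C A' B' C' : Set (ℝ × ℝ))
    (hA : Convex ℝ A) (hB : Convex ℝ B) (hC : Convex ℝ C)
    (hABC : A ∩ B ∩ C = ∅)
    (hsubA : A' ⊆ A) (hsubB : B' ⊆ B) (hsubC : C' ⊆ C)
    (x y z x' y' z' : ℝ × ℝ)
    (hx : x ∈ B ∩ C) (hy : y ∈ A ∩ C) (hz : z ∈ A ∩ B)
    (hx' : x' ∈ B' ∩ C') (hy' : y' ∈ A' ∩ C') (hz' : z' ∈ A' ∩ B') :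
    ptOrient x' y' z' = ptOrient x y z :=
  ptOrient_eq_of_inter_eq_empty hA hB hC hABC hx hy hz
    ⟨hsubB hx'.1, hsubC hx'.2⟩ ⟨hsubA hy'.1, hsubC hy'.2⟩ ⟨hsubA hz'.1, hsubB hz'.2⟩

theorem stmt_2 (A B C A' B' C' : Set (ℝ × ℝ))
    (hAc : IsCompact A) (hBc : IsCompact B) (hCc : IsCompact C)
    (hA : Convex ℝ A) (hB : Convex ℝ B) (hC : Convex ℝ C)
    (hAB : (A ∩ B).Nonempty) (hBC : (B ∩ C).Nonempty) (hAC : (A ∩ C).Nonempty)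
    (hABC : A ∩ B ∩ C = ∅)
    (hA' : Convex ℝ A') (hB' : Convex ℝ B') (hC' : Convex ℝ C')
    (hsubA : A' ⊆ A) (hsubB : B' ⊆ B) (hsubC : C' ⊆ C)
    (hAB' : (A' ∩ B').Nonempty) (hBC' : (B' ∩ C').Nonempty) (hAC' : (A' ∩ C').Nonempty)
    (x y z x' y' z' : ℝ × ℝ)
    (hx : x ∈ B ∩ C) (hy : y ∈ A ∩ C) (hz : z ∈ A ∩ B)
    (hx' : x' ∈ B' ∩ C') (hy' : y' ∈ A' ∩ C') (hz' : z' ∈ A' ∩ B') :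
    ptOrient x' y' z' = ptOrient x y z :=
  stmt_2_general A B C A' B' C' hA hB hC hABC hsubA hsubB hsubC x y z x' y' z' hx hy hz hx' hy' hz'
end

section
/- (Interiority Lemma, point version) Suppose A, B, C, O are compact convex sets in the plane, any two of which intersect, and suppose the triples (A,B,O), (B,C,O), (C,A,O) each have empty triple intersection and orientation +1. Then A ∩ B ∩ C = ∅ and the orientation of (A,B,C) is +1. -/
/-!
Fix `a ∈ A ∩ O`, `z ∈ A ∩ B`, `x ∈ B ∩ C` and `y ∈ A ∩ C`, and let `ℓ` be the line `az`. By
convexity the points of `O` on `ℓ` all come before those of `B`. If `(x, y, z)` is not positively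
oriented and `x` is not strictly left of `ℓ`, chasing where segments inside `O`, `B` and `C` cross
`ℓ` puts `C ∩ O`, then `C ∩ ℓ` and `A ∩ C` on definite sides, until the segment `[y, x] ⊆ C` meets
`ℓ` at a forbidden place. So `x` is strictly left of `ℓ`. The hypotheses are invariant under the
relabelling `(A, B, C, O) ↦ (B, A, O, C)`, which turns this into `x` being strictly right of `ℓ`.
Taking `x = y = z ∈ A ∩ B ∩ C` in the first step shows that this triple intersection is empty.
-/
open Set AffineMap

lemma ptOrient_eq_one_iff {p q r : ℝ × ℝ} : ptOrient p q r = 1 ↔ 0 < det2 p q r := by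
  refine ⟨fun h => ?_, Real.sign_of_pos⟩
  by_contra! hle
  rcases hle.lt_or_eq with hlt | heq
  · rw [ptOrient, Real.sign_of_neg hlt] at h; norm_num at h
  · rw [ptOrient, heq, Real.sign_zero] at h; norm_num at h

lemma det2_rotate (p q r : ℝ × ℝ) : det2 p q r = det2 q r p := by unfold det2; ring

lemma det2_swap₁₂ (p q r : ℝ × ℝ) : det2 q p r = -det2 p q r := by unfold det2; ring

lemma det2_swap₁₃ (p q r : ℝ × ℝ) : det2 r q p = -det2 p q r := by unfold det2; ring

lemma det2_lineMap_right (p q u v : ℝ × ℝ) (s : ℝ) :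
    det2 p q (lineMap u v s) = (1 - s) * det2 p q u + s * det2 p q v := by
  simp only [det2, fst_lineMap, snd_lineMap, lineMap_apply_ring]; ring

lemma det2_lineMap_lineMap (a z q : ℝ × ℝ) (s t : ℝ) :
    det2 (lineMap a z s) q (lineMap a z t) = (s - t) * det2 a z q := by
  simp only [det2, fst_lineMap, snd_lineMap, lineMap_apply_ring]; ring

lemma exists_eq_lineMap_of_det2_eq_zero {a z p : ℝ × ℝ} (haz : a ≠ z) (h : det2 a z p = 0) :
    ∃ t : ℝ, p = lineMap a z t := by
  have hN : (z.1 - a.1) ^ 2 + (z.2 - a.2) ^ 2 ≠ 0 := by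
    intro hN
    apply haz
    ext <;> nlinarith [sq_nonneg (z.1 - a.1), sq_nonneg (z.2 - a.2)]
  -- the parameter of the orthogonal projection of `p` onto the line
  refine ⟨((p.1 - a.1) * (z.1 - a.1) + (p.2 - a.2) * (z.2 - a.2)) /
    ((z.1 - a.1) ^ 2 + (z.2 - a.2) ^ 2), ?_⟩
  unfold det2 at h
  ext <;> simp only [fst_lineMap, snd_lineMap, lineMap_apply_ring'] <;> field_simp
  · linear_combination -(z.2 - a.2) * h
  · linear_combination (z.1 - a.1) * h

lemma exists_lineMap_eq_lineMap {a z u v : ℝ × ℝ} (haz : a ≠ z) (hu : 0 < det2 a z u)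
    (hv : det2 a z v ≤ 0) : ∃ s ∈ Ioc (0 : ℝ) 1, ∃ t : ℝ, lineMap u v s = lineMap a z t := by
  have hD : 0 < det2 a z u - det2 a z v := by linarith
  refine ⟨det2 a z u / (det2 a z u - det2 a z v), ⟨by positivity, ?_⟩,
    exists_eq_lineMap_of_det2_eq_zero haz ?_⟩
  · rw [div_le_one hD]; linarith
  · rw [det2_lineMap_right]; field_simp; ring

lemma pos_of_lineMap_mem {S : Set (ℝ × ℝ)} (hS : Convex ℝ S) {a z : ℝ × ℝ} (ha : a ∉ S)
    {p t : ℝ} (hp : lineMap a z p ∈ S) (hp0 : 0 ≤ p) (ht : lineMap a z t ∈ S) : 0 < t := by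
  by_contra! ht0
  have h0 := (hS.affine_preimage (lineMap a z)).ordConnected.out ht hp ⟨ht0, hp0⟩
  simp only [mem_preimage, lineMap_apply_zero] at h0
  exact ha h0

lemma lt_of_lineMap_mem {A B O : Set (ℝ × ℝ)} (hA : Convex ℝ A) (hB : Convex ℝ B)
    (hO : Convex ℝ O) (hABO : A ∩ B ∩ O = ∅) {a z : ℝ × ℝ} (ha : a ∈ A ∩ O) (hz : z ∈ A ∩ B)
    {s t : ℝ} (hs : lineMap a z s ∈ O) (ht : lineMap a z t ∈ B) : s < t := by
  have haB : a ∉ B := fun h => hABO.subset ⟨⟨ha.1, h⟩, ha.2⟩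
  have ht0 : 0 < t := pos_of_lineMap_mem hB haB (p := 1) (by simpa using hz.2) zero_le_one ht
  by_contra! hts
  have hO' := (hO.affine_preimage (lineMap a z)).ordConnected.out
    (by simpa using ha.2 : (0 : ℝ) ∈ lineMap a z ⁻¹' O) hs
  rcases le_or_gt t 1 with ht1 | ht1
  · exact hABO.subset ⟨⟨hA.lineMap_mem ha.1 hz.1 ⟨ht0.le, ht1⟩, ht⟩, hO' ⟨ht0.le, hts⟩⟩
  · exact hABO.subset ⟨hz, by simpa using hO' ⟨zero_le_one, ht1.le.trans hts⟩⟩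

lemma det2_lineMap_eq_zero (a z : ℝ × ℝ) (t : ℝ) : det2 a z (lineMap a z t) = 0 := by
  simp only [det2, fst_lineMap, snd_lineMap, lineMap_apply_ring]; ring

section Line

variable {A B C O : Set (ℝ × ℝ)} {a z b c x y : ℝ × ℝ}

lemma det2_pos_of_forall_lineMap_mem_lt (hO : Convex ℝ O) (haz : a ≠ z) (hbO : b ∈ O)
    (hcO : c ∈ O) (hb : 0 < det2 a z b) (hcbx : 0 < det2 c b x) {s t : ℝ} (hs : 0 < s)
    (hw : lineMap b x s = lineMap a z t) (hOt : ∀ r : ℝ, lineMap a z r ∈ O → r < t) :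
    0 < det2 a z c := by
  by_contra! hc
  obtain ⟨σ, hσ, r, ho⟩ := exists_lineMap_eq_lineMap haz hb hc
  have hrt := hOt r (ho ▸ hO.lineMap_mem hbO hcO (Ioc_subset_Icc_self hσ))
  have e1 : det2 (lineMap b c σ) b (lineMap b x s) = σ * s * det2 c b x := by
    simp only [det2, fst_lineMap, snd_lineMap, lineMap_apply_ring]; ring
  have e2 := det2_lineMap_lineMap a z b r t
  rw [← ho, ← hw] at e2
  nlinarith [mul_pos (mul_pos hσ.1 hs) hcbx]

lemma pos_of_lineMap_mem_of_crossing (hC : Convex ℝ C) (haC : a ∉ C) (haz : a ≠ z)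
    (hcC : c ∈ C) (hxC : x ∈ C) (hb : 0 < det2 a z b) (hc : 0 < det2 a z c)
    (hx : det2 a z x ≤ 0) (hcbx : 0 < det2 c b x) {s t₀ : ℝ} (hs : s ∈ Ioc (0 : ℝ) 1)
    (hw : lineMap b x s = lineMap a z t₀) (ht₀ : 0 < t₀) {t : ℝ} (ht : lineMap a z t ∈ C) :
    0 < t := by
  suffices ∃ p : ℝ, 0 ≤ p ∧ lineMap a z p ∈ C from
    let ⟨_, hp0, hp⟩ := this; pos_of_lineMap_mem hC haC hp hp0 ht
  rcases hx.lt_or_eq with hxneg | hx0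
  · obtain ⟨σ, hσ, p, hp⟩ := exists_lineMap_eq_lineMap haz hc hx
    refine ⟨p, ?_, hp ▸ hC.lineMap_mem hcC hxC (Ioc_subset_Icc_self hσ)⟩
    have e1 : det2 x (lineMap b x s) (lineMap c x σ) = (1 - s) * (1 - σ) * det2 x b c := by
      simp only [det2, fst_lineMap, snd_lineMap, lineMap_apply_ring]; ring
    have e2 : det2 x (lineMap a z t₀) (lineMap a z p) = (p - t₀) * det2 a z x := by
      simp only [det2, fst_lineMap, snd_lineMap, lineMap_apply_ring]; ring
    rw [← hw, ← hp, e1, det2_swap₁₃] at e2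
    have : 0 ≤ (1 - s) * (1 - σ) := mul_nonneg (by linarith [hs.2]) (by linarith [hσ.2])
    nlinarith [mul_nonneg this hcbx.le]
  · -- `x` is on the line, so the crossing point is `x` itself
    have hs1 : s = 1 := by
      have e := det2_lineMap_right a z b x s
      rw [hw, det2_lineMap_eq_zero, hx0] at e
      nlinarith
    exact ⟨t₀, ht₀.le, by rw [← hw, hs1, lineMap_apply_one]; exact hxC⟩

lemma det2_pos_of_forall_lineMap_mem_pos (hC : Convex ℝ C) (haz : a ≠ z) (hcC : c ∈ C)
    (hc : 0 < det2 a z c) (hCt : ∀ t : ℝ, lineMap a z t ∈ C → 0 < t) (hyC : y ∈ C)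
    (hacy : 0 < det2 a c y) : 0 < det2 a z y := by
  by_contra! hy
  obtain ⟨σ, hσ, t, hq⟩ := exists_lineMap_eq_lineMap haz hc hy
  have ht := hCt t (hq ▸ hC.lineMap_mem hcC hyC (Ioc_subset_Icc_self hσ))
  have e1 : det2 a c (lineMap c y σ) = σ * det2 a c y := by
    simp only [det2, fst_lineMap, snd_lineMap, lineMap_apply_ring]; ring
  have e2 := det2_lineMap_lineMap a z c 0 t
  rw [lineMap_apply_zero, ← hq, e1] at e2
  nlinarith [mul_pos hσ.1 hacy]

theorem det2_pos_of_orientations (hA : Convex ℝ A) (hB : Convex ℝ B) (hC : Convex ℝ C)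
    (hO : Convex ℝ O) (hABO : A ∩ B ∩ O = ∅) (ha : a ∈ A ∩ O) (haC : a ∉ C) (hz : z ∈ A ∩ B) (hb : b ∈ B ∩ O) (hc : c ∈ C ∩ O)
    (hx : x ∈ B ∩ C) (hy : y ∈ A ∩ C) (hbaz : 0 ≤ det2 b a z) (hcbx : 0 < det2 c b x)
    (hacy : ∀ y ∈ C ∩ A, 0 < det2 a c y) (hxyz : det2 x y z ≤ 0) : 0 < det2 a z x := by
  by_contra! hx0
  have haz : a ≠ z := fun h => hABO.subset ⟨⟨ha.1, h ▸ hz.2⟩, ha.2⟩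
  have hOB : ∀ s t : ℝ, lineMap a z s ∈ O → lineMap a z t ∈ B → s < t :=
    fun _ _ => lt_of_lineMap_mem hA hB hO hABO ha hz
  have hbpos : 0 < det2 a z b := by
    rw [det2_rotate] at hbaz
    refine hbaz.lt_of_ne' fun hb0 => ?_
    obtain ⟨r, hr⟩ := exists_eq_lineMap_of_det2_eq_zero haz hb0
    exact (hOB r r (hr ▸ hb.2) (hr ▸ hb.1)).false
  obtain ⟨s, hs, t₀, hw⟩ := exists_lineMap_eq_lineMap haz hbpos hx0
  have hwB : lineMap a z t₀ ∈ B := hw ▸ hB.lineMap_mem hb.1 hx.1 (Ioc_subset_Icc_self hs)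
  have ht₀ : 0 < t₀ := hOB 0 t₀ (by simpa using ha.2) hwB
  have hcpos : 0 < det2 a z c := det2_pos_of_forall_lineMap_mem_lt hO haz hb.2 hc.2 hbpos hcbx
    hs.1 hw fun r hr => hOB r t₀ hr hwB
  have hCt : ∀ t : ℝ, lineMap a z t ∈ C → 0 < t := fun _ =>
    pos_of_lineMap_mem_of_crossing hC haC haz hc.1 hx.2 hbpos hcpos hx0 hcbx hs hw ht₀
  have hCA : ∀ y ∈ C ∩ A, 0 < det2 a z y := fun y hy =>
    det2_pos_of_forall_lineMap_mem_pos hC haz hc.1 hcpos hCt hy.1 (hacy y hy)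
  -- `[y, x]` meets the line at a point of `C` which is neither in `[a, z] ⊆ A` nor beyond `z`
  obtain ⟨τ, hτ, t, hr⟩ := exists_lineMap_eq_lineMap haz (hCA y ⟨hy.2, hy.1⟩) hx0
  have hrC : lineMap a z t ∈ C := hr ▸ hC.lineMap_mem hy.2 hx.2 (Ioc_subset_Icc_self hτ)
  rcases le_or_gt t 1 with ht1 | ht1
  · have hrA := hA.lineMap_mem ha.1 hz.1 ⟨(hCt t hrC).le, ht1⟩
    exact (hCA _ ⟨hrC, hrA⟩).ne' (det2_lineMap_eq_zero a z t)
  · have e1 : det2 (lineMap y x τ) y z = τ * det2 x y z := by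
      simp only [det2, fst_lineMap, snd_lineMap, lineMap_apply_ring]; ring
    have e2 := det2_lineMap_lineMap a z y t 1
    rw [lineMap_apply_one, ← hr, e1] at e2
    nlinarith [mul_pos (sub_pos.2 ht1) (hCA y ⟨hy.2, hy.1⟩),
      mul_nonpos_of_nonneg_of_nonpos hτ.1.le hxyz]

end Line

theorem stmt_3_general (A B C O : Set (ℝ × ℝ))
    (hA : Convex ℝ A) (hB : Convex ℝ B) (hC : Convex ℝ C) (hO : Convex ℝ O)
    (hAO : (A ∩ O).Nonempty)
    (hBO : (B ∩ O).Nonempty) (hCO : (C ∩ O).Nonempty)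
    (hABO : A ∩ B ∩ O = ∅) (hBCO : B ∩ C ∩ O = ∅) (hCAO : C ∩ A ∩ O = ∅)
    (oABO : ∀ x ∈ B ∩ O, ∀ y ∈ A ∩ O, ∀ z ∈ A ∩ B, ptOrient x y z = 1)
    (oBCO : ∀ x ∈ C ∩ O, ∀ y ∈ B ∩ O, ∀ z ∈ B ∩ C, ptOrient x y z = 1)
    (oCAO : ∀ x ∈ A ∩ O, ∀ y ∈ C ∩ O, ∀ z ∈ C ∩ A, ptOrient x y z = 1) :
    A ∩ B ∩ C = ∅ ∧
      ∀ x ∈ B ∩ C, ∀ y ∈ A ∩ C, ∀ z ∈ A ∩ B, ptOrient x y z = 1 := by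
  simp only [ptOrient_eq_one_iff] at oABO oBCO oCAO ⊢
  obtain ⟨a, ha⟩ := hAO
  obtain ⟨b, hb⟩ := hBO
  obtain ⟨c, hc⟩ := hCO
  have key : ∀ x ∈ B ∩ C, ∀ y ∈ A ∩ C, ∀ z ∈ A ∩ B, det2 x y z ≤ 0 → 0 < det2 a z x :=
    fun x hx y hy z hz => det2_pos_of_orientations hA hB hC hO hABO ha
      (fun h => hCAO.subset ⟨⟨h, ha.1⟩, ha.2⟩) hz hb hc hx hy (oABO b hb a ha z hz).le
      (oBCO c hc b hb x hx) (oCAO a ha c hc)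
  have hABC : A ∩ B ∩ C = ∅ := eq_empty_of_forall_notMem fun w hw =>
    (key w ⟨hw.1.2, hw.2⟩ w ⟨hw.1.1, hw.2⟩ w hw.1 (by simp [det2])).ne (by unfold det2; ring)
  refine ⟨hABC, fun x hx y hy z hz => ?_⟩
  by_contra! hxyz
  have hxza := det2_pos_of_orientations hB hA hO hC (by rwa [inter_comm B A]) hx
    (fun h => hBCO.subset ⟨hx, h⟩) ⟨hz.2, hz.1⟩ hy ⟨hc.2, hc.1⟩ ha hb
    (by rw [det2_swap₁₂]; linarith) (by rw [← det2_rotate]; exact oCAO a ha c hc y ⟨hy.2, hy.1⟩)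
    (fun w hw => by rw [det2_rotate]; exact oBCO c hc w ⟨hw.2, hw.1⟩ x hx)
    (by rw [det2_swap₁₂]; linarith [oABO b hb a ha z hz])
  rw [det2_swap₁₃] at hxza
  linarith [key x hx y hy z hz hxyz]

theorem stmt_3 (A B C O : Set (ℝ × ℝ))
    (hAc : IsCompact A) (hBc : IsCompact B) (hCc : IsCompact C) (hOc : IsCompact O)
    (hA : Convex ℝ A) (hB : Convex ℝ B) (hC : Convex ℝ C) (hO : Convex ℝ O)
    (hAB : (A ∩ B).Nonempty) (hAC : (A ∩ C).Nonempty) (hAO : (A ∩ O).Nonempty)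
    (hBC : (B ∩ C).Nonempty) (hBO : (B ∩ O).Nonempty) (hCO : (C ∩ O).Nonempty)
    (hABO : A ∩ B ∩ O = ∅) (hBCO : B ∩ C ∩ O = ∅) (hCAO : C ∩ A ∩ O = ∅)
    (oABO : ∀ x ∈ B ∩ O, ∀ y ∈ A ∩ O, ∀ z ∈ A ∩ B, ptOrient x y z = 1)
    (oBCO : ∀ x ∈ C ∩ O, ∀ y ∈ B ∩ O, ∀ z ∈ B ∩ C, ptOrient x y z = 1)
    (oCAO : ∀ x ∈ A ∩ O, ∀ y ∈ C ∩ O, ∀ z ∈ C ∩ A, ptOrient x y z = 1) :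
    A ∩ B ∩ C = ∅ ∧
      ∀ x ∈ B ∩ C, ∀ y ∈ A ∩ C, ∀ z ∈ A ∩ B, ptOrient x y z = 1 :=
  stmt_3_general A B C O hA hB hC hO hAO hBO hCO hABO hBCO hCAO oABO oBCO oCAO
end

section
/- Case 0 of the Interiority Lemma: if A, B, C, O are compact convex planar sets, pairwise intersecting, with (A,B,O), (B,C,O), (C,A,O) each having empty triple intersection and orientation +1, then A ∩ B ∩ C = ∅. (Equivalently: if w ∈ A ∩ B ∩ C and a ∈ A∩O, b ∈ B∩O, c ∈ C∩O with sign det(b−a, w−a) = sign det(c−b, w−b) = sign det(a−c, w−c) = +1, then w lies in the convex hull of {a,b,c} ⊆ O, contradicting A∩B∩O = ∅.) -/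
/-!
Pick `w ∈ A ∩ B ∩ C` and `a ∈ A ∩ O`, `b ∈ B ∩ O`, `c ∈ C ∩ O`. The three orientation
hypotheses say that `w` lies strictly on the same side of each edge of the triangle `abc`, so
the three determinants are positive barycentric weights of `w` with respect to `a, b, c`. Hence
`w` lies in the convex hull of `{a, b, c} ⊆ O`, i.e. `w ∈ A ∩ B ∩ O = ∅`.
-/

theorem Real.sign_eq_one_iff {r : ℝ} : Real.sign r = 1 ↔ 0 < r := by
  refine ⟨fun h => ?_, Real.sign_of_pos⟩
  by_contra! hr
  rcases hr.lt_or_eq with hr | rfl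
  · rw [Real.sign_of_neg hr] at h
    norm_num at h
  · rw [Real.sign_zero] at h
    exact zero_ne_one h

theorem mem_convexHull_triple_of_smul_add_smul_add_smul {E : Type*} [AddCommGroup E]
    [Module ℝ E] {a b c w : E} {α β γ : ℝ} (hα : 0 ≤ α) (hβ : 0 ≤ β) (hγ : 0 ≤ γ)
    (hsum : 0 < α + β + γ) (h : α • a + β • b + γ • c = (α + β + γ) • w) :
    w ∈ convexHull ℝ {a, b, c} := by
  have hmem := (Finset.univ : Finset (Fin 3)).centerMass_mem_convexHull
    (w := ![α, β, γ]) (z := ![a, b, c]) (s := {a, b, c})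
    (by simp [Fin.forall_fin_succ, hα, hβ, hγ]) (by simpa [Fin.sum_univ_three] using hsum)
    (by simp [Fin.forall_fin_succ])
  simp only [Finset.centerMass, Fin.sum_univ_three, Matrix.cons_val] at hmem
  rwa [h, inv_smul_smul₀ hsum.ne'] at hmem

/-- Cramer's rule in the plane: the signed areas of the triangles `c b w`, `a c w`, `b a w`
are barycentric coordinates of `w` with respect to `a, b, c`. -/
theorem det2_smul_add_det2_smul_add_det2_smul (a b c w : ℝ × ℝ) :
    det2 c b w • a + det2 a c w • b + det2 b a w • c
      = (det2 c b w + det2 a c w + det2 b a w) • w := by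
  ext <;> simp only [det2, Prod.fst_add, Prod.snd_add, Prod.smul_fst, Prod.smul_snd,
    smul_eq_mul] <;> ring

theorem mem_convexHull_of_det2_pos {a b c w : ℝ × ℝ} (hba : 0 < det2 b a w)
    (hcb : 0 < det2 c b w) (hac : 0 < det2 a c w) : w ∈ convexHull ℝ {a, b, c} :=
  mem_convexHull_triple_of_smul_add_smul_add_smul hcb.le hac.le hba.le (by positivity)
    (det2_smul_add_det2_smul_add_det2_smul a b c w)

theorem stmt_4_general (A B C O : Set (ℝ × ℝ))
    (hO : Convex ℝ O) (hAO : (A ∩ O).Nonempty) (hBO : (B ∩ O).Nonempty)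
    (hCO : (C ∩ O).Nonempty) (hABO : A ∩ B ∩ O = ∅)
    (oABO : ∀ x ∈ B ∩ O, ∀ y ∈ A ∩ O, ∀ z ∈ A ∩ B, ptOrient x y z = 1)
    (oBCO : ∀ x ∈ C ∩ O, ∀ y ∈ B ∩ O, ∀ z ∈ B ∩ C, ptOrient x y z = 1)
    (oCAO : ∀ x ∈ A ∩ O, ∀ y ∈ C ∩ O, ∀ z ∈ C ∩ A, ptOrient x y z = 1) :
    A ∩ B ∩ C = ∅ := by
  refine Set.eq_empty_of_forall_notMem fun w ⟨⟨hwA, hwB⟩, hwC⟩ => ?_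
  obtain ⟨a, haA, haO⟩ := hAO
  obtain ⟨b, hbB, hbO⟩ := hBO
  obtain ⟨c, hcC, hcO⟩ := hCO
  have hba := Real.sign_eq_one_iff.1 (oABO b ⟨hbB, hbO⟩ a ⟨haA, haO⟩ w ⟨hwA, hwB⟩)
  have hcb := Real.sign_eq_one_iff.1 (oBCO c ⟨hcC, hcO⟩ b ⟨hbB, hbO⟩ w ⟨hwB, hwC⟩)
  have hac := Real.sign_eq_one_iff.1 (oCAO a ⟨haA, haO⟩ c ⟨hcC, hcO⟩ w ⟨hwC, hwA⟩)
  have hwO : w ∈ O := convexHull_min (by simp [Set.insert_subset_iff, haO, hbO, hcO]) hO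
    (mem_convexHull_of_det2_pos hba hcb hac)
  exact hABO.subset ⟨⟨hwA, hwB⟩, hwO⟩

theorem stmt_4 (A B C O : Set (ℝ × ℝ))
    (hAc : IsCompact A) (hBc : IsCompact B) (hCc : IsCompact C) (hOc : IsCompact O)
    (hA : Convex ℝ A) (hB : Convex ℝ B) (hC : Convex ℝ C) (hO : Convex ℝ O)
    (hAB : (A ∩ B).Nonempty) (hAC : (A ∩ C).Nonempty) (hAO : (A ∩ O).Nonempty)
    (hBC : (B ∩ C).Nonempty) (hBO : (B ∩ O).Nonempty) (hCO : (C ∩ O).Nonempty)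
    (hABO : A ∩ B ∩ O = ∅) (hBCO : B ∩ C ∩ O = ∅) (hCAO : C ∩ A ∩ O = ∅)
    (oABO : ∀ x ∈ B ∩ O, ∀ y ∈ A ∩ O, ∀ z ∈ A ∩ B, ptOrient x y z = 1)
    (oBCO : ∀ x ∈ C ∩ O, ∀ y ∈ B ∩ O, ∀ z ∈ B ∩ C, ptOrient x y z = 1)
    (oCAO : ∀ x ∈ A ∩ O, ∀ y ∈ C ∩ O, ∀ z ∈ C ∩ A, ptOrient x y z = 1) :
    A ∩ B ∩ C = ∅ :=
  stmt_4_general A B C O hO hAO hBO hCO hABO oABO oBCO oCAO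
end

section
/- The order-type orientation of points satisfies the interiority condition: for points a, b, c, d in the plane, if the ordered triples (a,b,d), (b,c,d), (c,a,d) all have positive orientation, then (a,b,c) has positive orientation. -/
theorem stmt_6 (a b c d : ℝ × ℝ)
    (h1 : 0 < det2 a b d) (h2 : 0 < det2 b c d) (h3 : 0 < det2 c a d) :
    0 < det2 a b c := by
  have : det2 a b c = det2 a b d + det2 b c d + det2 c a d := by
    simp only [det2]; ring
  linarith
end

section
/- Every total 3-order on a finite set can be extended to a total 3-order on the set with one additional element. Concretely: let X be a set with an alternating function o : X³ → {+1, −1} (o(A,B,C) = o(C,A,B) = o(B,C,A) = −o(A,C,B)) satisfying the interiority condition. Fix A ∈ X and adjoin a new element A'; define o(A',B,C) := o(A,B,C) for B, C ∈ X distinct from A, and o(A,A',B) := +1 for all B ∈ X \ {A}. Then the extended orientation on X ∪ {A'} is alternating and still satisfies the interiority condition. -/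
open Classical in
noncomputable def stmt7g {X : Type*} (o : X → X → X → ℤ) (A : X) (b c : X) : ℤ :=
  if b = A then -1 else if c = A then 1 else o A b c

noncomputable def stmt7o {X : Type*} (o : X → X → X → ℤ) (A : X) :
    Option X → Option X → Option X → ℤ
  | some a, some b, some c => o a b c
  | none, some b, some c => stmt7g o A b c
  | some a, none, some c => stmt7g o A c a
  | some a, some b, none => stmt7g o A a b
  | _, _, _ => 0

lemma stmt7g_val {X : Type*} (o : X → X → X → ℤ)
    (hval : ∀ a b c : X, a ≠ b → a ≠ c → b ≠ c → o a b c = 1 ∨ o a b c = -1)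
    (A : X) (b c : X) (hbc : b ≠ c) :
    stmt7g o A b c = 1 ∨ stmt7g o A b c = -1 := by
  unfold stmt7g
  by_cases hb : b = A
  · simp [hb]
  · by_cases hc : c = A
    · simp [hb, hc]
    · simpa [hb, hc] using hval A b c (fun h => hb h.symm) (fun h => hc h.symm) hbc

lemma stmt7g_anti {X : Type*} (o : X → X → X → ℤ)
    (hanti : ∀ a b c : X, a ≠ b → a ≠ c → b ≠ c → o a c b = - o a b c)
    (A : X) (b c : X) (hbc : b ≠ c) :
    stmt7g o A c b = - stmt7g o A b c := by
  unfold stmt7g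
  by_cases hb : b = A
  · have hc : c ≠ A := fun h => hbc (hb.trans h.symm)
    simp [hb, hc]
  · by_cases hc : c = A
    · simp [hb, hc]
    · simp only [hb, hc, if_false]
      exact hanti A b c (fun h => hb h.symm) (fun h => hc h.symm) hbc

theorem stmt_7 {X : Type*} (o : X → X → X → ℤ)
    (hval : ∀ a b c : X, a ≠ b → a ≠ c → b ≠ c → o a b c = 1 ∨ o a b c = -1)
    (hcyc : ∀ a b c : X, a ≠ b → a ≠ c → b ≠ c → o a b c = o c a b)
    (hanti : ∀ a b c : X, a ≠ b → a ≠ c → b ≠ c → o a c b = - o a b c)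
    (hint : ∀ a b c d : X, a ≠ b → a ≠ c → a ≠ d → b ≠ c → b ≠ d → c ≠ d →
      o a b d = 1 → o b c d = 1 → o c a d = 1 → o a b c = 1)
    (A : X) :
    ∃ o' : Option X → Option X → Option X → ℤ,
      (∀ a b c : X, a ≠ b → a ≠ c → b ≠ c →
        o' (some a) (some b) (some c) = o a b c) ∧
      (∀ b c : X, b ≠ A → c ≠ A → b ≠ c → o' none (some b) (some c) = o A b c) ∧
      (∀ b : X, b ≠ A → o' (some A) none (some b) = 1) ∧
      (∀ a b c : Option X, a ≠ b → a ≠ c → b ≠ c →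
        o' a b c = 1 ∨ o' a b c = -1) ∧
      (∀ a b c : Option X, a ≠ b → a ≠ c → b ≠ c → o' a b c = o' c a b) ∧
      (∀ a b c : Option X, a ≠ b → a ≠ c → b ≠ c → o' a c b = - o' a b c) ∧
      (∀ a b c d : Option X, a ≠ b → a ≠ c → a ≠ d → b ≠ c → b ≠ d → c ≠ d →
        o' a b d = 1 → o' b c d = 1 → o' c a d = 1 → o' a b c = 1) := by
  classical
  have gA : ∀ c : X, stmt7g o A A c = -1 := by intro c; simp [stmt7g]
  have gA' : ∀ b : X, b ≠ A → stmt7g o A b A = 1 := by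
    intro b hb; simp [stmt7g, hb]
  have gother : ∀ b c : X, b ≠ A → c ≠ A → stmt7g o A b c = o A b c := by
    intro b c hb hc; simp [stmt7g, hb, hc]
  refine ⟨stmt7o o A, ?_, ?_, ?_, ?_, ?_, ?_, ?_⟩
  · intro a b c _ _ _; rfl
  · intro b c hb hc _; exact gother b c hb hc
  · intro b hb
    show stmt7g o A b A = 1
    exact gA' b hb
  · -- values
    rintro (_|a) (_|b) (_|c) hab hac hbc
    · exact absurd rfl hab
    · exact absurd rfl hab
    · exact absurd rfl hac
    · exact stmt7g_val o hval A b c (by simpa using hbc)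
    · exact absurd rfl hbc
    · exact stmt7g_val o hval A c a (by simpa [eq_comm] using hac)
    · exact stmt7g_val o hval A a b (by simpa using hab)
    · exact hval a b c (by simpa using hab) (by simpa using hac) (by simpa using hbc)
  · -- cyclic
    rintro (_|a) (_|b) (_|c) hab hac hbc
    · exact absurd rfl hab
    · exact absurd rfl hab
    · exact absurd rfl hac
    · rfl
    · exact absurd rfl hbc
    · rfl
    · rfl
    · exact hcyc a b c (by simpa using hab) (by simpa using hac) (by simpa using hbc)
  · -- antisymmetry
    rintro (_|a) (_|b) (_|c) hab hac hbc
    · exact absurd rfl hab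
    · exact absurd rfl hab
    · exact absurd rfl hac
    · exact stmt7g_anti o hanti A b c (by simpa using hbc)
    · exact absurd rfl hbc
    · -- a some, b none, c some : o' a c none = g a c, -o' a none c = -g c a
      show stmt7g o A a c = - stmt7g o A c a
      have := stmt7g_anti o hanti A c a (by simpa [eq_comm] using hac)
      linarith
    · -- a some, b some, c none : o' a none b = g b a = - g a b
      show stmt7g o A b a = - stmt7g o A a b
      exact stmt7g_anti o hanti A a b (by simpa using hab)
    · exact hanti a b c (by simpa using hab) (by simpa using hac) (by simpa using hbc)
  · -- interiority
    rintro (_|a) (_|b) (_|c) (_|d) hab hac had hbc hbd hcd h1 h2 h3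
    all_goals try exact absurd rfl ‹(none : Option X) ≠ none›
    · -- a = none; h1 : g b d, h2 : o b c d, h3 : g d c ; goal g b c = 1
      show stmt7g o A b c = 1
      have hbc' : b ≠ c := by simpa using hbc
      have hbd' : b ≠ d := by simpa using hbd
      have hcd' : c ≠ d := by simpa using hcd
      replace h1 : stmt7g o A b d = 1 := h1
      replace h2 : o b c d = 1 := h2
      replace h3 : stmt7g o A d c = 1 := h3
      by_cases hbA : b = A
      · rw [hbA, gA] at h1; omega
      by_cases hcA : c = A
      · rw [hcA]; exact gA' b hbA
      by_cases hdA : d = A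
      · rw [hdA, gA] at h3; omega
      rw [gother b d hbA hdA] at h1
      rw [gother d c hdA hcA] at h3
      rw [gother b c hbA hcA]
      have hAb : A ≠ b := fun h => hbA h.symm
      have hAc : A ≠ c := fun h => hcA h.symm
      have hAd : A ≠ d := fun h => hdA h.symm
      have h3' : o c A d = 1 := by
        rw [← hcyc A d c hAd hAc (fun h => hcd' h.symm)]; exact h3
      exact hint A b c d hAb hAc hAd hbc' hbd' hcd' h1 h2 h3'
    · -- b = none; h1 : o' a none d = g d a, h2 : o' none c d = g c d, h3 : o c a d
      show stmt7g o A c a = 1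
      have hac' : a ≠ c := by simpa using hac
      have had' : a ≠ d := by simpa using had
      have hcd' : c ≠ d := by simpa using hcd
      replace h1 : stmt7g o A d a = 1 := h1
      replace h2 : stmt7g o A c d = 1 := h2
      replace h3 : o c a d = 1 := h3
      by_cases hcA : c = A
      · rw [hcA, gA] at h2; omega
      by_cases haA : a = A
      · rw [haA]; exact gA' c hcA
      by_cases hdA : d = A
      · rw [hdA, gA] at h1; omega
      rw [gother d a hdA haA] at h1
      rw [gother c d hcA hdA] at h2
      rw [gother c a hcA haA]
      have hAa : A ≠ a := fun h => haA h.symm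
      have hAc : A ≠ c := fun h => hcA h.symm
      have hAd : A ≠ d := fun h => hdA h.symm
      have h1' : o a A d = 1 := by
        rw [← hcyc A d a hAd hAa (fun h => had' h.symm)]; exact h1
      exact hint A c a d hAc hAa hAd (fun h => hac' h.symm) hcd' had' h2 h3 h1'
    · -- c = none; h1 : o a b d, h2 : o' b none d = g d b, h3 : o' none a d = g a d
      show stmt7g o A a b = 1
      have hab' : a ≠ b := by simpa using hab
      have had' : a ≠ d := by simpa using had
      have hbd' : b ≠ d := by simpa using hbd
      replace h1 : o a b d = 1 := h1
      replace h2 : stmt7g o A d b = 1 := h2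
      replace h3 : stmt7g o A a d = 1 := h3
      by_cases haA : a = A
      · rw [haA, gA] at h3; omega
      by_cases hbA : b = A
      · rw [hbA]; exact gA' a haA
      by_cases hdA : d = A
      · rw [hdA, gA] at h2; omega
      rw [gother d b hdA hbA] at h2
      rw [gother a d haA hdA] at h3
      rw [gother a b haA hbA]
      have hAa : A ≠ a := fun h => haA h.symm
      have hAb : A ≠ b := fun h => hbA h.symm
      have hAd : A ≠ d := fun h => hdA h.symm
      have h2' : o b A d = 1 := by
        rw [← hcyc A d b hAd hAb (fun h => hbd' h.symm)]; exact h2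
      exact hint A a b d hAa hAb hAd hab' had' hbd' h3 h1 h2'
    · -- d = none; h1 : g a b, h2 : g b c, h3 : g c a ; goal o a b c
      show o a b c = 1
      have hab' : a ≠ b := by simpa using hab
      have hac' : a ≠ c := by simpa using hac
      have hbc' : b ≠ c := by simpa using hbc
      replace h1 : stmt7g o A a b = 1 := h1
      replace h2 : stmt7g o A b c = 1 := h2
      replace h3 : stmt7g o A c a = 1 := h3
      by_cases haA : a = A
      · rw [haA, gA] at h1; omega
      by_cases hbA : b = A
      · rw [hbA, gA] at h2; omega
      by_cases hcA : c = A
      · rw [hcA, gA] at h3; omega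
      rw [gother a b haA hbA] at h1
      rw [gother b c hbA hcA] at h2
      rw [gother c a hcA haA] at h3
      have hAa : A ≠ a := fun h => haA h.symm
      have hAb : A ≠ b := fun h => hbA h.symm
      have hAc : A ≠ c := fun h => hcA h.symm
      have h1' : o a b A = 1 := by
        rw [hcyc a b A hab' (fun h => haA h) (fun h => hbA h)]; exact h1
      have h2' : o b c A = 1 := by
        rw [hcyc b c A hbc' (fun h => hbA h) (fun h => hcA h)]; exact h2
      have h3' : o c a A = 1 := by
        rw [hcyc c a A (fun h => hac' h.symm) (fun h => hcA h) (fun h => haA h)]; exact h3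
      exact hint a b c A hab' hac' (fun h => haA h) hbc' (fun h => hbA h) (fun h => hcA h)
        h1' h2' h3'
    · exact hint a b c d (by simpa using hab) (by simpa using hac) (by simpa using had)
        (by simpa using hbc) (by simpa using hbd) (by simpa using hcd) h1 h2 h3
end

section
/- No directed 4-cycles: let o be a partial orientation of triples of a set satisfying (i) the interiority condition, (ii) the double-intersection rule (o(ABC)=o(ABD)=0 and o(ACD)≠0 and o(BCD)≠0 imply o(ACD)=o(BCD)), and (iii) the (4,3) property (among any four elements at least one triple has orientation 0). Fix an element D and define a digraph G_D on the remaining elements with edge A→B iff o(A,B,D)=+1. Then G_D contains no directed 4-cycle. -/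
theorem stmt_11 {X : Type*} (o : X → X → X → ℤ)
    (hval : ∀ a b c : X, a ≠ b → a ≠ c → b ≠ c →
      o a b c = 1 ∨ o a b c = 0 ∨ o a b c = -1)
    (hcyc : ∀ a b c : X, a ≠ b → a ≠ c → b ≠ c → o a b c = o c a b)
    (hanti : ∀ a b c : X, a ≠ b → a ≠ c → b ≠ c → o a c b = - o a b c)
    (hint : ∀ a b c d : X, a ≠ b → a ≠ c → a ≠ d → b ≠ c → b ≠ d → c ≠ d →
      o a b d = 1 → o b c d = 1 → o c a d = 1 → o a b c = 1)
    (hdouble : ∀ a b c d : X, a ≠ b → a ≠ c → a ≠ d → b ≠ c → b ≠ d → c ≠ d →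
      o a b c = 0 → o a b d = 0 → o a c d ≠ 0 → o b c d ≠ 0 → o a c d = o b c d)
    (h43 : ∀ a b c d : X, a ≠ b → a ≠ c → a ≠ d → b ≠ c → b ≠ d → c ≠ d →
      o a b c = 0 ∨ o a b d = 0 ∨ o a c d = 0 ∨ o b c d = 0)
    (D : X) :
    ¬ ∃ a b c d : X, a ≠ b ∧ a ≠ c ∧ a ≠ d ∧ b ≠ c ∧ b ≠ d ∧ c ≠ d ∧
      a ≠ D ∧ b ≠ D ∧ c ≠ D ∧ d ≠ D ∧
      o a b D = 1 ∧ o b c D = 1 ∧ o c d D = 1 ∧ o d a D = 1 := by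
  rintro ⟨a, b, c, d, hab, hac, had, hbc, hbd, hcd, haD, hbD, hcD, hdD,
    e1, e2, e3, e4⟩
  -- swapping the first two arguments negates the orientation
  have swap : ∀ x y z : X, x ≠ y → x ≠ z → y ≠ z → o y x z = - o x y z := by
    intro x y z hxy hxz hyz
    have h1 := hcyc y x z hxy.symm hyz hxz
    have h2 := hcyc z y x hyz.symm hxz.symm hxy.symm
    have h3 := hanti x y z hxy hxz hyz
    linarith
  -- key lemma: the "diagonal" of a directed 4-cycle is degenerate with D
  have key : ∀ x y z w : X, x ≠ y → x ≠ z → x ≠ w → y ≠ z → y ≠ w → z ≠ w →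
      x ≠ D → y ≠ D → z ≠ D → w ≠ D →
      o x y D = 1 → o y z D = 1 → o z w D = 1 → o w x D = 1 → o x z D = 0 := by
    intro x y z w hxy hxz hxw hyz hyw hzw hxD hyD hzD hwD f1 f2 f3 f4
    have hne1 : o x z D ≠ 1 := by
      intro h
      have hxzw : o x z w = 1 := hint x z w D hxz hxw hxD hzw hzD hwD h f3 f4
      have hxwD : o x w D = -1 := by
        have := swap w x D hxw.symm hwD hxD; linarith
      rcases h43 x z w D hxz hxw hxD hzw hzD hwD with h0 | h0 | h0 | h0 <;> omega
    have hne2 : o x z D ≠ -1 := by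
      intro h
      have hzxD : o z x D = 1 := by
        have := swap x z D hxz hxD hzD; linarith
      have hxyz : o x y z = 1 := hint x y z D hxy hxz hxD hyz hyD hzD f1 f2 hzxD
      rcases h43 x y z D hxy hxz hxD hyz hyD hzD with h0 | h0 | h0 | h0 <;> omega
    rcases hval x z D hxz hxD hzD with h | h | h <;> omega
  -- nonzero lemma: with a degenerate diagonal, adjacent triples are nondegenerate
  have nz : ∀ x y z : X, x ≠ y → x ≠ z → y ≠ z → x ≠ D → y ≠ D → z ≠ D →
      o x z D = 0 → o x y D = 1 → o y z D = 1 → o x y z ≠ 0 := by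
    intro x y z hxy hxz hyz hxD hyD hzD h0 f1 f2 hcontra
    have hxzy : o x z y = 0 := by
      have := hanti x y z hxy hxz hyz; linarith
    have hzyD : o z y D = -1 := by
      have := swap y z D hyz hyD hzD; linarith
    have := hdouble x z y D hxz hxy hxD hyz.symm hzD hyD hxzy h0
      (by omega) (by omega)
    omega
  have hac0 : o a c D = 0 := key a b c d hab hac had hbc hbd hcd haD hbD hcD hdD e1 e2 e3 e4
  have hbd0 : o b d D = 0 := key b c d a hbc hbd hab.symm hcd hac.symm had.symm hbD hcD hdD haD e2 e3 e4 e1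
  have hca0 : o c a D = 0 := by
    have := swap a c D hac haD hcD; omega
  have hdb0 : o d b D = 0 := by
    have := swap b d D hbd hbD hdD; omega
  have n1 : o a b c ≠ 0 := nz a b c hab hac hbc haD hbD hcD hac0 e1 e2
  have n2 : o b c d ≠ 0 := nz b c d hbc hbd hcd hbD hcD hdD hbd0 e2 e3
  have n3 : o a c d ≠ 0 := by
    have h := nz c d a hcd hac.symm had.symm hcD hdD haD hca0 e3 e4
    have := hcyc c d a hcd hac.symm had.symm
    omega
  have n4 : o a b d ≠ 0 := by
    have h := nz d a b had.symm hbd.symm hab hdD haD hbD hdb0 e4 e1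
    have h1 := hcyc d a b had.symm hbd.symm hab
    have h2 := hcyc b d a hbd hab.symm had.symm
    omega
  rcases h43 a b c d hab hac had hbc hbd hcd with h | h | h | h <;> omega
end

section
/- For every k ≥ 2 there is a partial orientation o on the k² element set {1,…,k} × {1,…,k} satisfying the interiority condition, the double-intersection rule, and the (4,3) property, whose largest 0-clique (set of elements all of whose triples have orientation 0) has exactly 2k−1 elements. The orientation: for X=(i_X,j_X), Y, Z, set o(X,Y,Z)=0 unless exactly two of the first coordinates are equal and they are smaller than the third one; if i_X=i_Y<i_Z, set o(X,Y,Z)=+1 iff j_X<j_Y, extended cyclically and antisymmetrically. -/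
def sgn (x y : ℕ × ℕ) : ℤ := if x.2 < y.2 then 1 else if y.2 < x.2 then -1 else 0

def oo (a b c : ℕ × ℕ) : ℤ :=
  if a.1 = b.1 ∧ a.1 < c.1 then sgn a b
  else if b.1 = c.1 ∧ b.1 < a.1 then sgn b c
  else if c.1 = a.1 ∧ c.1 < b.1 then sgn c a
  else 0

lemma oo_zero_iff (a b c : ℕ × ℕ) : oo a b c = 0 ↔
    ¬((a.1 = b.1 ∧ a.1 < c.1 ∧ a.2 ≠ b.2) ∨ (b.1 = c.1 ∧ b.1 < a.1 ∧ b.2 ≠ c.2) ∨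
      (c.1 = a.1 ∧ c.1 < b.1 ∧ c.2 ≠ a.2)) := by
  unfold oo sgn; split_ifs <;> (try simp only [false_iff, true_iff, not_not]) <;> omega

lemma oo_ne_zero_iff (a b c : ℕ × ℕ) : oo a b c ≠ 0 ↔
    ((a.1 = b.1 ∧ a.1 < c.1 ∧ a.2 ≠ b.2) ∨ (b.1 = c.1 ∧ b.1 < a.1 ∧ b.2 ≠ c.2) ∨
      (c.1 = a.1 ∧ c.1 < b.1 ∧ c.2 ≠ a.2)) := by
  rw [Ne, oo_zero_iff, not_not]

lemma oo_one_iff (a b c : ℕ × ℕ) : oo a b c = 1 ↔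
    ((a.1 = b.1 ∧ a.1 < c.1 ∧ a.2 < b.2) ∨ (b.1 = c.1 ∧ b.1 < a.1 ∧ b.2 < c.2) ∨
      (c.1 = a.1 ∧ c.1 < b.1 ∧ c.2 < a.2)) := by
  unfold oo sgn; split_ifs <;> (try simp only [false_iff, true_iff, not_not]) <;> omega

lemma oo_vals (a b c : ℕ × ℕ) : oo a b c = 1 ∨ oo a b c = 0 ∨ oo a b c = -1 := by
  unfold oo sgn; split_ifs <;> norm_num

lemma oo_cyc (a b c : ℕ × ℕ) : oo a b c = oo c a b := by
  unfold oo sgn; split_ifs <;> (try simp only [false_iff, true_iff, not_not]) <;> omega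

lemma oo_anti (a b c : ℕ × ℕ) : oo a c b = - oo a b c := by
  unfold oo sgn; split_ifs <;> (try simp only [false_iff, true_iff, not_not]) <;> omega

lemma oo_br2 (a b c : ℕ × ℕ) (h : b.1 = c.1) (h2 : b.1 < a.1) : oo a b c = sgn b c := by
  unfold oo; split_ifs <;> (first | rfl | omega)

lemma pair_ne (a b : ℕ × ℕ) (h : a ≠ b) : ¬(a.1 = b.1 ∧ a.2 = b.2) :=
  fun hh => h (Prod.ext hh.1 hh.2)

def grid (k : ℕ) : Finset (ℕ × ℕ) := Finset.Icc 1 k ×ˢ Finset.Icc 1 k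

def IsZeroClique (o : ℕ × ℕ → ℕ × ℕ → ℕ × ℕ → ℤ) (S : Finset (ℕ × ℕ)) : Prop :=
  ∀ a ∈ S, ∀ b ∈ S, ∀ c ∈ S, a ≠ b → a ≠ c → b ≠ c → o a b c = 0

lemma mem_grid {k : ℕ} {p : ℕ × ℕ} : p ∈ grid k ↔ (1 ≤ p.1 ∧ p.1 ≤ k) ∧ 1 ≤ p.2 ∧ p.2 ≤ k := by
  simp [grid, Finset.mem_Icc]

set_option maxHeartbeats 2000000 in
theorem stmt_13 (k : ℕ) (hk : 2 ≤ k) :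
    ∃ o : ℕ × ℕ → ℕ × ℕ → ℕ × ℕ → ℤ,
      (∀ a ∈ grid k, ∀ b ∈ grid k, ∀ c ∈ grid k, a ≠ b → a ≠ c → b ≠ c →
        o a b c = 1 ∨ o a b c = 0 ∨ o a b c = -1) ∧
      (∀ a ∈ grid k, ∀ b ∈ grid k, ∀ c ∈ grid k, a ≠ b → a ≠ c → b ≠ c →
        o a b c = o c a b) ∧
      (∀ a ∈ grid k, ∀ b ∈ grid k, ∀ c ∈ grid k, a ≠ b → a ≠ c → b ≠ c →
        o a c b = - o a b c) ∧
      (∀ a ∈ grid k, ∀ b ∈ grid k, ∀ c ∈ grid k, ∀ d ∈ grid k,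
        a ≠ b → a ≠ c → a ≠ d → b ≠ c → b ≠ d → c ≠ d →
        o a b d = 1 → o b c d = 1 → o c a d = 1 → o a b c = 1) ∧
      (∀ a ∈ grid k, ∀ b ∈ grid k, ∀ c ∈ grid k, ∀ d ∈ grid k,
        a ≠ b → a ≠ c → a ≠ d → b ≠ c → b ≠ d → c ≠ d →
        o a b c = 0 → o a b d = 0 → o a c d ≠ 0 → o b c d ≠ 0 →
        o a c d = o b c d) ∧
      (∀ a ∈ grid k, ∀ b ∈ grid k, ∀ c ∈ grid k, ∀ d ∈ grid k,
        a ≠ b → a ≠ c → a ≠ d → b ≠ c → b ≠ d → c ≠ d →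
        o a b c = 0 ∨ o a b d = 0 ∨ o a c d = 0 ∨ o b c d = 0) ∧
      (∃ S : Finset (ℕ × ℕ), S ⊆ grid k ∧ IsZeroClique o S ∧ S.card = 2 * k - 1) ∧
      (∀ S : Finset (ℕ × ℕ), S ⊆ grid k → IsZeroClique o S → S.card ≤ 2 * k - 1) := by
  refine ⟨oo, ?_, ?_, ?_, ?_, ?_, ?_, ?_, ?_⟩
  · exact fun a _ b _ c _ _ _ _ => oo_vals a b c
  · exact fun a _ b _ c _ _ _ _ => oo_cyc a b c
  · exact fun a _ b _ c _ _ _ _ => oo_anti a b c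
  · -- interiority: premise never holds
    intro a _ b _ c _ d _ _ _ _ _ _ _ h1 h2 h3
    rw [oo_one_iff] at h1 h2 h3
    exfalso
    rcases h1 with h1 | h1 | h1 <;> rcases h2 with h2 | h2 | h2 <;>
      rcases h3 with h3 | h3 | h3 <;> omega
  · -- double intersection rule
    intro a _ b _ c _ d _ hab hac had hbc hbd hcd h1 h2 h3 h4
    rw [oo_zero_iff] at h1 h2
    rw [oo_ne_zero_iff] at h3 h4
    have pab := pair_ne a b hab
    have n1 : ¬(a.1 = b.1 ∧ a.1 < c.1 ∧ a.2 ≠ b.2) := fun x => h1 (Or.inl x)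
    have n2 : ¬(a.1 = b.1 ∧ a.1 < d.1 ∧ a.2 ≠ b.2) := fun x => h2 (Or.inl x)
    clear h1 h2
    rcases h3 with h3 | h3 | h3 <;> rcases h4 with h4 | h4 | h4
    all_goals first
      | (rw [oo_br2 a c d h3.1 h3.2.1, oo_br2 b c d h4.1 h4.2.1])
      | (exfalso; omega)
  · -- (4,3) property
    intro a _ b _ c _ d _ hab hac had hbc hbd hcd
    by_contra h
    push_neg at h
    obtain ⟨h1, h2, h3, h4⟩ := h
    rw [oo_ne_zero_iff] at h1 h2 h3 h4
    have ext : ∀ x y z : ℕ × ℕ,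
        ((x.1 = y.1 ∧ x.1 < z.1 ∧ x.2 ≠ y.2) ∨ (y.1 = z.1 ∧ y.1 < x.1 ∧ y.2 ≠ z.2) ∨
          (z.1 = x.1 ∧ z.1 < y.1 ∧ z.2 ≠ x.2)) →
        ((x.1 = y.1 ∧ x.1 < z.1) ∨ (y.1 = z.1 ∧ y.1 < x.1) ∨ (z.1 = x.1 ∧ z.1 < y.1)) := by
      rintro x y z (⟨h, h', -⟩ | ⟨h, h', -⟩ | ⟨h, h', -⟩)
      exacts [Or.inl ⟨h, h'⟩, Or.inr (Or.inl ⟨h, h'⟩), Or.inr (Or.inr ⟨h, h'⟩)]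
    have g1 := ext _ _ _ h1
    have g2 := ext _ _ _ h2
    have g3 := ext _ _ _ h3
    have g4 := ext _ _ _ h4
    clear h1 h2 h3 h4 ext
    rcases g1 with g1 | g1 | g1 <;> rcases g2 with g2 | g2 | g2 <;>
      rcases g3 with g3 | g3 | g3 <;> rcases g4 with g4 | g4 | g4 <;> omega
  · -- existence of a zero-clique of size 2k-1
    refine ⟨((Finset.Icc 1 k).image (fun j => (k, j))) ∪
            ((Finset.Icc 1 (k - 1)).image (fun i => (i, 1))), ?_, ?_, ?_⟩
    · intro p hp
      simp only [Finset.mem_union, Finset.mem_image, Finset.mem_Icc] at hp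
      rw [mem_grid]
      rcases hp with ⟨j, hj, rfl⟩ | ⟨i, hi, rfl⟩ <;> simp <;> omega
    · intro a ha b hb c hc hab hac hbc
      have key : ∀ p : ℕ × ℕ, p ∈ ((Finset.Icc 1 k).image (fun j => (k, j))) ∪
            ((Finset.Icc 1 (k - 1)).image (fun i => (i, 1))) →
            p.1 = k ∨ (p.2 = 1 ∧ p.1 + 1 ≤ k ∧ 1 ≤ p.1) := by
        intro p hp
        simp only [Finset.mem_union, Finset.mem_image, Finset.mem_Icc] at hp
        rcases hp with ⟨j, hj, rfl⟩ | ⟨i, hi, rfl⟩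
        · left; rfl
        · right; simp; omega
      have hka := key a ha
      have hkb := key b hb
      have hkc := key c hc
      rw [oo_zero_iff]
      omega
    · rw [Finset.card_union_of_disjoint, Finset.card_image_of_injective,
          Finset.card_image_of_injective]
      · simp only [Nat.card_Icc]
        omega
      · intro i j hij; simpa using hij
      · intro i j hij; simpa using hij
      · simp only [Finset.disjoint_left, Finset.mem_image, Finset.mem_Icc]
        rintro p ⟨j, hj, rfl⟩ ⟨i, hi, hip⟩
        have : i = k := congrArg Prod.fst hip
        omega
  · -- upper bound
    intro S hSg hS
    rcases S.eq_empty_or_nonempty with rfl | hne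
    · simp
    obtain ⟨r, hrS, hrmax⟩ := S.exists_max_image Prod.fst hne
    have hrk : r.1 ≤ k := (mem_grid.mp (hSg hrS)).1.2
    have key : Set.InjOn (fun p : ℕ × ℕ => if p.1 = r.1 then p.2 else k + p.1) S := by
      intro p hp q hq hpq
      simp only at hpq
      have hgp := mem_grid.mp (hSg hp)
      have hgq := mem_grid.mp (hSg hq)
      by_contra hne'
      have hps := pair_ne p q hne'
      split_ifs at hpq with h1 h2 h2
      · -- both in max row
        exact hps ⟨h1.trans h2.symm, hpq⟩
      · omega
      · omega
      · -- both outside max row: p.1 = q.1 < r.1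
        have hpq1 : p.1 = q.1 := by omega
        have hpr : p ≠ r := fun h => h1 (congrArg Prod.fst h)
        have hqr : q ≠ r := fun h => h2 (congrArg Prod.fst h)
        have hz := hS p hp q hq r hrS hne' hpr hqr
        rw [oo_zero_iff] at hz
        have hp1 : p.1 ≤ r.1 := hrmax p hp
        omega
    have hmaps : ∀ p ∈ S, (if p.1 = r.1 then p.2 else k + p.1) ∈ Finset.Icc 1 (2 * k - 1) := by
      intro p hp
      have hg := mem_grid.mp (hSg hp)
      have hp1 : p.1 ≤ r.1 := hrmax p hp
      rw [Finset.mem_Icc]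
      split_ifs <;> omega
    have := Finset.card_le_card_of_injOn _ hmaps key
    simpa using this
end

section
/- Suppose A, B, C, D are compact convex planar sets forming a holey family (pairwise intersecting, no three with a common point) with D contained in the hollow of (A,B,C) in the orientation sense: the triples (A,B,D), (B,C,D), (C,A,D) all have the same nonzero orientation as (A,B,C). Take any a ∈ A∩D, b ∈ B∩D, c ∈ C∩D, z ∈ A∩B, x ∈ B∩C, y ∈ A∩C with all six points distinct and in general position. If the triangle (a,b,c) has positive orientation, then none of x, y, z lies in the convex hull of {a,b,c}, and moreover x, y, z each lie in specified regions of the complement of the triangle determined by the lines ab, bc, ca (x strictly on the negative side of line ab extended appropriately, etc.), as dictated by the orientations o(a,b,z) = o(b,c,x) = o(c,a,y) = −1. -/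
lemma pos_of_sign_eq_one {d : ℝ} (h : Real.sign d = 1) : 0 < d := by
  rcases lt_trichotomy d 0 with h0 | h0 | h0
  · rw [Real.sign_of_neg h0] at h; norm_num at h
  · rw [h0, Real.sign_zero] at h; norm_num at h
  · exact h0

lemma det2_halfplane_convex (p q : ℝ × ℝ) : Convex ℝ {r : ℝ × ℝ | 0 ≤ det2 p q r} := by
  intro r hr s hs u v hu hv huv
  have hveq : v = 1 - u := by linarith
  subst hveq
  simp only [Set.mem_setOf_eq, det2, Prod.smul_fst, Prod.smul_snd, Prod.fst_add, Prod.snd_add,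
    smul_eq_mul] at *
  nlinarith [mul_nonneg hu hr, mul_nonneg hv hs]

theorem stmt_15 (A B C D : Set (ℝ × ℝ))
    (hAc : IsCompact A) (hBc : IsCompact B) (hCc : IsCompact C) (hDc : IsCompact D)
    (hA : Convex ℝ A) (hB : Convex ℝ B) (hC : Convex ℝ C) (hD : Convex ℝ D)
    (hAB : (A ∩ B).Nonempty) (hAC : (A ∩ C).Nonempty) (hAD : (A ∩ D).Nonempty)
    (hBC : (B ∩ C).Nonempty) (hBD : (B ∩ D).Nonempty) (hCD : (C ∩ D).Nonempty)
    (hABC : A ∩ B ∩ C = ∅) (hABD : A ∩ B ∩ D = ∅)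
    (hACD : A ∩ C ∩ D = ∅) (hBCD : B ∩ C ∩ D = ∅)
    (oABD : ∀ x ∈ B ∩ D, ∀ y ∈ A ∩ D, ∀ z ∈ A ∩ B, ptOrient x y z = 1)
    (oBCD : ∀ x ∈ C ∩ D, ∀ y ∈ B ∩ D, ∀ z ∈ B ∩ C, ptOrient x y z = 1)
    (oCAD : ∀ x ∈ A ∩ D, ∀ y ∈ C ∩ D, ∀ z ∈ C ∩ A, ptOrient x y z = 1)
    (oABC : ∀ x ∈ B ∩ C, ∀ y ∈ A ∩ C, ∀ z ∈ A ∩ B, ptOrient x y z = -1)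
    (a b c x y z : ℝ × ℝ)
    (ha : a ∈ A ∩ D) (hb : b ∈ B ∩ D) (hc : c ∈ C ∩ D)
    (hz : z ∈ A ∩ B) (hx : x ∈ B ∩ C) (hy : y ∈ A ∩ C)
    (hdist : [a, b, c, x, y, z].Pairwise (· ≠ ·))
    (hgen : ∀ p q r : ℝ × ℝ, p ∈ ({a, b, c, x, y, z} : Set (ℝ × ℝ)) →
      q ∈ ({a, b, c, x, y, z} : Set (ℝ × ℝ)) →
      r ∈ ({a, b, c, x, y, z} : Set (ℝ × ℝ)) →
      p ≠ q → p ≠ r → q ≠ r → ¬ Collinear ℝ ({p, q, r} : Set (ℝ × ℝ)))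
    (habc : 0 < det2 a b c) :
    x ∉ convexHull ℝ ({a, b, c} : Set (ℝ × ℝ)) ∧
    y ∉ convexHull ℝ ({a, b, c} : Set (ℝ × ℝ)) ∧
    z ∉ convexHull ℝ ({a, b, c} : Set (ℝ × ℝ)) ∧
    det2 a b z < 0 ∧ det2 b c x < 0 ∧ det2 c a y < 0 := by
  have habz : det2 a b z < 0 := by
    have h := pos_of_sign_eq_one (oABD b hb a ha z hz)
    simp only [det2] at h ⊢; nlinarith
  have hbcx : det2 b c x < 0 := by
    have h := pos_of_sign_eq_one (oBCD c hc b hb x hx)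
    simp only [det2] at h ⊢; nlinarith
  have hcay : det2 c a y < 0 := by
    have h := pos_of_sign_eq_one (oCAD a ha c hc y (Set.inter_comm A C ▸ hy))
    simp only [det2] at h ⊢; nlinarith
  have hull_sub : ∀ p q : ℝ × ℝ, a ∈ {r : ℝ × ℝ | 0 ≤ det2 p q r} →
      b ∈ {r : ℝ × ℝ | 0 ≤ det2 p q r} → c ∈ {r : ℝ × ℝ | 0 ≤ det2 p q r} →
      convexHull ℝ ({a, b, c} : Set (ℝ × ℝ)) ⊆ {r : ℝ × ℝ | 0 ≤ det2 p q r} := by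
    intro p q hpa hpb hpc
    apply convexHull_min _ (det2_halfplane_convex p q)
    intro w hw
    rcases hw with rfl | rfl | rfl <;> assumption
  refine ⟨?_, ?_, ?_, habz, hbcx, hcay⟩
  · intro hmem
    have := hull_sub b c (by simp only [Set.mem_setOf_eq, det2] at *; nlinarith)
      (by simp only [Set.mem_setOf_eq, det2]; nlinarith) (by simp only [Set.mem_setOf_eq, det2]; nlinarith) hmem
    simp only [Set.mem_setOf_eq] at this; linarith
  · intro hmem
    have := hull_sub c a (by simp only [Set.mem_setOf_eq, det2]; nlinarith) (by simp only [Set.mem_setOf_eq, det2] at *; nlinarith)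
      (by simp only [Set.mem_setOf_eq, det2]; nlinarith) hmem
    simp only [Set.mem_setOf_eq] at this; linarith
  · intro hmem
    have := hull_sub a b (by simp only [Set.mem_setOf_eq, det2]; nlinarith) (by simp only [Set.mem_setOf_eq, det2]; nlinarith)
      (by simp only [Set.mem_setOf_eq, det2] at *; nlinarith) hmem
    simp only [Set.mem_setOf_eq] at this; linarith
end

section
/- Mirsky-type (p,2) theorem for intervals: let F be a finite family of closed nonempty intervals in ℝ such that among any p+1 of them, some two intersect (equivalently: there is no subfamily of p+1 pairwise disjoint intervals). Then there exist p points in ℝ such that every interval in F contains at least one of them. -/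
theorem stmt_16 (p : ℕ) (F : Finset (ℝ × ℝ)) (hne : ∀ I ∈ F, I.1 ≤ I.2)
    (h : ∀ G ⊆ F, p + 1 ≤ G.card →
      ∃ I ∈ G, ∃ J ∈ G, I ≠ J ∧ (Set.Icc I.1 I.2 ∩ Set.Icc J.1 J.2).Nonempty) :
    ∃ T : Finset ℝ, T.card ≤ p ∧ ∀ I ∈ F, ∃ t ∈ T, t ∈ Set.Icc I.1 I.2 := by
  induction p generalizing F with
  | zero =>
    refine ⟨∅, le_refl _, fun I hI => ?_⟩
    obtain ⟨A, hA, B, hB, hAB, -⟩ := h {I} (by simpa using hI) (by simp)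
    simp only [Finset.mem_singleton] at hA hB
    exact absurd (hA.trans hB.symm) hAB
  | succ p ih =>
    rcases F.eq_empty_or_nonempty with rfl | hFne
    · exact ⟨∅, by simp, by simp⟩
    obtain ⟨I₀, hI₀, hmin⟩ := F.exists_min_image (fun I => I.2) hFne
    set t := I₀.2 with ht
    have htI₀ : t ∈ Set.Icc I₀.1 I₀.2 := ⟨hne I₀ hI₀, le_refl _⟩
    set F' := F.filter (fun I => t ∉ Set.Icc I.1 I.2) with hF'
    have hF'sub : F' ⊆ F := Finset.filter_subset _ _
    have hleft : ∀ I ∈ F', t < I.1 := by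
      intro I hI
      rw [hF', Finset.mem_filter] at hI
      by_contra hlt
      push_neg at hlt
      exact hI.2 ⟨hlt, hmin I hI.1⟩
    have hI₀notF' : I₀ ∉ F' := by
      rw [hF', Finset.mem_filter]
      exact fun hc => hc.2 htI₀
    have hhyp : ∀ G ⊆ F', p + 1 ≤ G.card →
        ∃ I ∈ G, ∃ J ∈ G, I ≠ J ∧ (Set.Icc I.1 I.2 ∩ Set.Icc J.1 J.2).Nonempty := by
      intro G hG hGcard
      have hI₀G : I₀ ∉ G := fun hc => hI₀notF' (hG hc)
      obtain ⟨A, hA, B, hB, hAB, x, hxA, hxB⟩ := h (insert I₀ G)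
        (Finset.insert_subset hI₀ (hG.trans hF'sub))
        (by rw [Finset.card_insert_of_notMem hI₀G]; omega)
      rw [Finset.mem_insert] at hA hB
      have key : ∀ J ∈ G, ¬(Set.Icc I₀.1 I₀.2 ∩ Set.Icc J.1 J.2).Nonempty := by
        rintro J hJ ⟨y, hy1, hy2⟩
        exact absurd (hy1.2.trans_lt (hleft J (hG hJ))) (not_lt.2 hy2.1)
      rcases hA with rfl | hA
      · exact absurd ⟨x, hxA, hxB⟩ (key B (hB.resolve_left (Ne.symm hAB)))
      rcases hB with rfl | hB
      · exact absurd ⟨x, hxB, hxA⟩ (key A hA)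
      exact ⟨A, hA, B, hB, hAB, x, hxA, hxB⟩
    obtain ⟨T', hT'card, hT'cov⟩ := ih F' (fun I hI => hne I (hF'sub hI)) hhyp
    refine ⟨insert t T', ?_, ?_⟩
    · calc (insert t T').card ≤ T'.card + 1 := Finset.card_insert_le _ _
        _ ≤ p + 1 := by omega
    · intro I hI
      by_cases hc : t ∈ Set.Icc I.1 I.2
      · exact ⟨t, Finset.mem_insert_self _ _, hc⟩
      · have : I ∈ F' := by rw [hF', Finset.mem_filter]; exact ⟨hI, hc⟩
        obtain ⟨s, hs, hsI⟩ := hT'cov I this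
        exact ⟨s, Finset.mem_insert_of_mem hs, hsI⟩
end
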